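/- In the explicit characterization of mode subtyping, Shared is not a subtype of Owned, Unowned is not a subtype of Shared, and no non-state-set mode is a subtype of a state set except via reflexivity-impossible cases; in particular, Owned is not a subtype of any state set S̄. -/
import Mathlib


inductive Mode : Type
  | owned | unowned | shared
  | states : Finset ℕ → Mode
  deriving DecidableEq

inductive ModeSub : Mode → Mode → Prop
  | refl (m : Mode) : ModeSub m m
  | statesSub {S S' : Finset ℕ} : S ⊆ S' → ModeSub (.states S) (.states S')
  | statesOwned (S : Finset ℕ) : ModeSub (.states S) .owned
  | ownedShared : ModeSub .owned .shared
  | ownedUnowned : ModeSub .owned .unowned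
  | sharedUnowned : ModeSub .shared .unowned
  | statesUnowned (S : Finset ℕ) : ModeSub (.states S) .unowned
  | trans {m1 m2 m3 : Mode} : ModeSub m1 m2 → ModeSub m2 m3 → ModeSub m1 m3


def Mode.rank : Mode → ℕ
  | .states _ => 0
  | .owned => 1
  | .shared => 2
  | .unowned => 3

lemma ModeSub.rank_le {m m' : Mode} (h : ModeSub m m') : m.rank ≤ m'.rank := by
  induction h with
  | refl => exact le_refl _
  | statesSub _ => exact le_refl _
  | statesOwned => exact Nat.zero_le _
  | ownedShared => exact Nat.le_succ _
  | ownedUnowned => simp [Mode.rank]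
  | sharedUnowned => simp [Mode.rank]
  | statesUnowned => exact Nat.zero_le _
  | trans _ _ ih1 ih2 => exact le_trans ih1 ih2

theorem modeSub_negative_results :
    ¬ ModeSub .shared .owned ∧
    ¬ ModeSub .unowned .shared ∧
    ¬ ModeSub .unowned .owned ∧
    (∀ S : Finset ℕ,
      ¬ ModeSub .owned (.states S) ∧
      ¬ ModeSub .shared (.states S) ∧
      ¬ ModeSub .unowned (.states S)) := by
  refine ⟨fun h => ?_, fun h => ?_, fun h => ?_, fun S => ⟨fun h => ?_, fun h => ?_, fun h => ?_⟩⟩ <;>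
    simpa [Mode.rank] using h.rank_le
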